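/- Let ω, c be real with c² < 4ω and let m_N = inf{S(v) : v ∈ H¹(ℝ;ℂ)∖{0}, I(v) = 0} be the minimum of the action over the Nehari manifold. Then m_N = (1/4)·inf{L(v) : v ∈ H¹(ℝ;ℂ)∖{0}, I(v) ≤ 0}, where L(v) = ‖v_x‖²_{L²} + ω‖v‖²_{L²} + c·Im∫_ℝ v·conj(v_x) dx. -/

import Mathlib

open MeasureTheory

/-- `v ∈ H¹(ℝ;ℂ)` with weak derivative `v'` (data given as a pair). -/
def H1pair (v v' : ℝ → ℂ) : Prop :=
  (∀ x, HasDerivAt v (v' x) x) ∧ MemLp v 2 volume ∧ MemLp v' 2 volume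

/-- The Nehari functional `I(v)`. -/
noncomputable def Ifun (ω c : ℝ) (v v' : ℝ → ℂ) : ℝ :=
  (∫ x, ‖v' x‖ ^ 2)
    + (∫ x, (((‖v x‖ ^ 2 : ℝ) : ℂ) * (starRingEnd ℂ) (v x) * v' x).im)
    + ω * (∫ x, ‖v x‖ ^ 2)
    + c * (∫ x, (v x * (starRingEnd ℂ) (v' x)).im)

/-- The action `S = E + ωM + cP`. -/
noncomputable def Sfun (ω c : ℝ) (v v' : ℝ → ℂ) : ℝ :=
  ((1 / 2) * (∫ x, ‖v' x‖ ^ 2)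
      + (1 / 4) * (∫ x, (((‖v x‖ ^ 2 : ℝ) : ℂ) * (starRingEnd ℂ) (v x) * v' x).im))
    + ω * ((1 / 2) * ∫ x, ‖v x‖ ^ 2)
    + c * ((1 / 2) * ∫ x, (v x * (starRingEnd ℂ) (v' x)).im)

/-- The quadratic functional `L(v) = ‖v_x‖² + ω‖v‖² + c·Im∫v·conj(v_x)`. -/
noncomputable def Lfun (ω c : ℝ) (v v' : ℝ → ℂ) : ℝ :=
  (∫ x, ‖v' x‖ ^ 2) + ω * (∫ x, ‖v x‖ ^ 2)
    + c * (∫ x, (v x * (starRingEnd ℂ) (v' x)).im)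

/-!
Write `I = L + N` with `L` the quadratic part and `N` the quartic part, so that `S = (I + L) / 4`.
Both `L` and `N` are homogeneous under real dilations, of degrees `2` and `4`. Since `c² < 4ω`,
completing the square gives `L(v) ≥ (ω - c²/4)‖v‖² > 0` for `v ≠ 0`. Hence every Nehari point has
`S = L / 4`, and a nonzero `v` with `I(v) ≤ 0` has `N(v) ≤ -L(v) < 0`, so `λ² = -L(v)/N(v) ∈ (0, 1]`
puts `λv` on the Nehari manifold with `S(λv) = λ²L(v)/4 ≤ L(v)/4`. The two infima therefore agree.
-/

noncomputable def Nfun (v v' : ℝ → ℂ) : ℝ :=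
  ∫ x, (((‖v x‖ ^ 2 : ℝ) : ℂ) * (starRingEnd ℂ) (v x) * v' x).im

lemma Ifun_eq_Lfun_add_Nfun (ω c : ℝ) (v v' : ℝ → ℂ) :
    Ifun ω c v v' = Lfun ω c v v' + Nfun v v' := by
  unfold Ifun Lfun Nfun; ring

lemma Sfun_eq_Ifun_add_Lfun (ω c : ℝ) (v v' : ℝ → ℂ) :
    Sfun ω c v v' = (Ifun ω c v v' + Lfun ω c v v') / 4 := by
  unfold Sfun Ifun Lfun; ring

lemma H1pair.const_mul {v v' : ℝ → ℂ} (h : H1pair v v') (a : ℂ) :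
    H1pair (fun x => a * v x) (fun x => a * v' x) :=
  ⟨fun x => (h.1 x).const_mul a, h.2.1.const_mul a, h.2.2.const_mul a⟩

section Dilation

variable (t : ℝ) (v v' : ℝ → ℂ)

lemma norm_ofReal_mul_sq (z : ℂ) : ‖(t : ℂ) * z‖ ^ 2 = t ^ 2 * ‖z‖ ^ 2 := by
  rw [norm_mul, mul_pow, Complex.norm_real, Real.norm_eq_abs, sq_abs]

lemma Lfun_ofReal_mul (ω c : ℝ) :
    Lfun ω c (fun x => (t : ℂ) * v x) (fun x => (t : ℂ) * v' x) = t ^ 2 * Lfun ω c v v' := by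
  have hcross : ∀ x, ((t : ℂ) * v x * (starRingEnd ℂ) ((t : ℂ) * v' x)).im
      = t ^ 2 * (v x * (starRingEnd ℂ) (v' x)).im := fun x => by
    rw [map_mul, Complex.conj_ofReal, ← Complex.im_ofReal_mul]
    push_cast
    ring_nf
  simp only [Lfun, norm_ofReal_mul_sq, hcross, integral_const_mul]
  ring

lemma Nfun_ofReal_mul :
    Nfun (fun x => (t : ℂ) * v x) (fun x => (t : ℂ) * v' x) = t ^ 4 * Nfun v v' := by
  have hquartic : ∀ x, (((‖(t : ℂ) * v x‖ ^ 2 : ℝ) : ℂ) * (starRingEnd ℂ) ((t : ℂ) * v x)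
        * ((t : ℂ) * v' x)).im
      = t ^ 4 * (((‖v x‖ ^ 2 : ℝ) : ℂ) * (starRingEnd ℂ) (v x) * v' x).im := fun x => by
    rw [norm_ofReal_mul_sq, map_mul, Complex.conj_ofReal, ← Complex.im_ofReal_mul]
    push_cast
    ring_nf
  simp only [Nfun, hquartic, integral_const_mul]

end Dilation

section Coercivity

variable {v v' : ℝ → ℂ}

lemma le_norm_sq_add_cross (ω c : ℝ) (a b : ℂ) :
    (ω - c ^ 2 / 4) * ‖a‖ ^ 2 ≤ ‖b‖ ^ 2 + ω * ‖a‖ ^ 2 + c * (a * (starRingEnd ℂ) b).im := by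
  have hcross : |c * (a * (starRingEnd ℂ) b).im| ≤ |c| * (‖a‖ * ‖b‖) := by
    rw [abs_mul]
    gcongr
    simpa using Complex.abs_im_le_norm (a * (starRingEnd ℂ) b)
  nlinarith [neg_abs_le (c * (a * (starRingEnd ℂ) b).im), sq_nonneg (‖b‖ - |c| * ‖a‖ / 2),
    sq_abs c]

lemma H1pair.integrable_im_mul_conj (h : H1pair v v') :
    Integrable (fun x => (v x * (starRingEnd ℂ) (v' x)).im) :=
  (h.2.1.integrable_mul h.2.2.star).im

lemma H1pair.integral_norm_sq_pos (h : H1pair v v') (hv : v ≠ 0) :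
    0 < ∫ x, ‖v x‖ ^ 2 := by
  have hcont : Continuous fun x => ‖v x‖ ^ 2 :=
    (continuous_iff_continuousAt.2 fun x => (h.1 x).continuousAt).norm.pow 2
  obtain ⟨x₀, hx₀⟩ := Function.ne_iff.1 hv
  rw [integral_pos_iff_support_of_nonneg (fun x => by positivity) h.2.1.norm.integrable_sq]
  exact hcont.isOpen_support.measure_pos volume ⟨x₀, by simpa using hx₀⟩

lemma H1pair.Lfun_eq_integral (ω c : ℝ) (h : H1pair v v') :
    Lfun ω c v v'
      = ∫ x, ‖v' x‖ ^ 2 + ω * ‖v x‖ ^ 2 + c * (v x * (starRingEnd ℂ) (v' x)).im := by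
  have h₁ : Integrable fun x => ‖v' x‖ ^ 2 := h.2.2.norm.integrable_sq
  have h₂ : Integrable fun x => ω * ‖v x‖ ^ 2 := h.2.1.norm.integrable_sq.const_mul ω
  have h₃ : Integrable fun x => c * (v x * (starRingEnd ℂ) (v' x)).im :=
    h.integrable_im_mul_conj.const_mul c
  have h₁₂ : Integrable fun x => ‖v' x‖ ^ 2 + ω * ‖v x‖ ^ 2 := h₁.add h₂
  rw [integral_add h₁₂ h₃, integral_add h₁ h₂, integral_const_mul, integral_const_mul,
    Lfun]

lemma H1pair.le_Lfun (ω c : ℝ) (h : H1pair v v') :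
    (ω - c ^ 2 / 4) * ∫ x, ‖v x‖ ^ 2 ≤ Lfun ω c v v' := by
  have hL : Integrable fun x =>
      ‖v' x‖ ^ 2 + ω * ‖v x‖ ^ 2 + c * (v x * (starRingEnd ℂ) (v' x)).im :=
    (h.2.2.norm.integrable_sq.add (h.2.1.norm.integrable_sq.const_mul ω)).add
      (h.integrable_im_mul_conj.const_mul c)
  rw [h.Lfun_eq_integral, ← integral_const_mul]
  exact integral_mono (h.2.1.norm.integrable_sq.const_mul _) hL
    fun x => le_norm_sq_add_cross ω c (v x) (v' x)

lemma H1pair.Lfun_pos {ω c : ℝ} (hωc : c ^ 2 < 4 * ω) (h : H1pair v v') (hv : v ≠ 0) :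
    0 < Lfun ω c v v' :=
  (mul_pos (by linarith) (h.integral_norm_sq_pos hv)).trans_le (h.le_Lfun ω c)

end Coercivity

lemma H1pair.exists_nehari_Sfun_le {ω c : ℝ} (hωc : c ^ 2 < 4 * ω) {v v' : ℝ → ℂ}
    (h : H1pair v v') (hv : v ≠ 0) (hI : Ifun ω c v v' ≤ 0) :
    ∃ w w' : ℝ → ℂ, H1pair w w' ∧ w ≠ 0 ∧ Ifun ω c w w' = 0
      ∧ Sfun ω c w w' ≤ Lfun ω c v v' / 4 := by
  have hL : 0 < Lfun ω c v v' := h.Lfun_pos hωc hv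
  have hN : Nfun v v' ≤ -Lfun ω c v v' := by
    rw [Ifun_eq_Lfun_add_Nfun] at hI; linarith
  set t := Real.sqrt (Lfun ω c v v' / -Nfun v v')
  have ht_sq : t ^ 2 = Lfun ω c v v' / -Nfun v v' :=
    Real.sq_sqrt (div_nonneg hL.le (by linarith))
  have ht_sq_le : t ^ 2 ≤ 1 := ht_sq ▸ (div_le_one (by linarith)).2 (by linarith)
  have ht : (t : ℂ) ≠ 0 := Complex.ofReal_ne_zero.2 (Real.sqrt_pos.2 (div_pos hL (by linarith))).ne'
  have hI_t : Ifun ω c (fun x => (t : ℂ) * v x) (fun x => (t : ℂ) * v' x) = 0 := by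
    rw [Ifun_eq_Lfun_add_Nfun, Lfun_ofReal_mul, Nfun_ofReal_mul, show t ^ 4 = (t ^ 2) ^ 2 by ring,
      ht_sq]
    field_simp
    ring
  refine ⟨_, _, h.const_mul t, fun h0 => hv ?_, hI_t, ?_⟩
  · funext x
    exact (mul_eq_zero.1 (congrFun h0 x)).resolve_left ht
  · rw [Sfun_eq_Ifun_add_Lfun, hI_t, Lfun_ofReal_mul]
    nlinarith

/-- `m_N = (1/4)·inf{L(v) : v ≠ 0, I(v) ≤ 0}`. -/
theorem stmt5 (ω c : ℝ) (hωc : c ^ 2 < 4 * ω) :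
    sInf {m : ℝ |
        ∃ v v' : ℝ → ℂ, H1pair v v' ∧ v ≠ 0 ∧ Ifun ω c v v' = 0 ∧ Sfun ω c v v' = m}
      = (1 / 4) * sInf {m : ℝ |
        ∃ v v' : ℝ → ℂ, H1pair v v' ∧ v ≠ 0 ∧ Ifun ω c v v' ≤ 0 ∧ Lfun ω c v v' = m} := by
  rw [← smul_eq_mul, ← Real.sInf_smul_of_nonneg (by norm_num)]
  refine csInf_eq_csInf_of_forall_exists_le ?_ ?_
  · rintro _ ⟨v, v', h, hv, hI, rfl⟩
    refine ⟨_, ⟨Lfun ω c v v', ⟨v, v', h, hv, hI.le, rfl⟩, rfl⟩, le_of_eq ?_⟩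
    simp only [smul_eq_mul, Sfun_eq_Ifun_add_Lfun, hI]
    ring
  · rintro _ ⟨_, ⟨v, v', h, hv, hI, rfl⟩, rfl⟩
    obtain ⟨w, w', hw, hw0, hwI, hwS⟩ := h.exists_nehari_Sfun_le hωc hv hI
    exact ⟨_, ⟨w, w', hw, hw0, hwI, rfl⟩, by simp only [smul_eq_mul]; linarith⟩
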